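/- arXiv:2604.15243 — 3 statements merged into one kernel-verified Lean document; each statement's English description precedes it below -/
import Mathlib

section
/- Let G be a group with the property that for every virtually free abelian subgroup H of G there exists a subgroup H' of G commensurable with H such that the commensurator N_G[H] equals the normalizer N_G(H'). Then every subgroup L of G inherits the same property: for every virtually free abelian subgroup H of L there exists a subgroup H'' of L commensurable with H such that the commensurator of H in L equals the normalizer of H'' in L. -/
/-- A group is virtually `ℤ^r` if it contains a finite-index subgroup
isomorphic to the free abelian group `ℤ^r`. -/
def IsVirtuallyZpow (G : Type*) [Group G] (r : ℕ) : Prop :=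
  ∃ H : Subgroup G, H.FiniteIndex ∧ Nonempty (H ≃* Multiplicative (Fin r → ℤ))

/-- A group is virtually free abelian if it is virtually `ℤ^r` for some `r ≥ 0`. -/
def IsVirtuallyFreeAbelian (G : Type*) [Group G] : Prop :=
  ∃ r : ℕ, IsVirtuallyZpow G r

/-!
Put `Ĥ = H` viewed in `G` and let `H'` be the subgroup given by the hypothesis on `G`; the
candidate in `L` is `H'' = H' ∩ L`. Since `Ĥ ≤ L`, the subgroup `H' ∩ L` still contains the
finite-index subgroup `Ĥ ∩ H'` of `H'`, so it is commensurable with `H'` and hence with `H`.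
Commensurability of subgroups of `L` can be tested in `G`, so `N_L[H] = N_G[Ĥ] ∩ L = N_G(H') ∩ L`,
which lies in `N_L(H'')`; conversely `N_L(H'') ≤ N_L[H''] = N_L[H]`.
-/

open Pointwise Subgroup

theorem IsVirtuallyFreeAbelian.of_mulEquiv {A B : Type*} [Group A] [Group B] (e : A ≃* B)
    (h : IsVirtuallyFreeAbelian A) : IsVirtuallyFreeAbelian B := by
  obtain ⟨r, H, hH, ⟨eH⟩⟩ := h
  exact ⟨r, H.map (e : A →* B), ⟨by rw [index_map_equiv]; exact hH.index_ne_zero⟩,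
    ⟨(H.equivMapOfInjective _ e.injective).symm.trans eH⟩⟩

namespace Subgroup

variable {G G' : Type*} [Group G] [Group G']

theorem toConjAct_smul_map (f : G →* G') (g : G) (H : Subgroup G) :
    ConjAct.toConjAct (f g) • H.map f = (ConjAct.toConjAct g • H).map f := by
  simp only [pointwise_smul_def]
  ext x
  simp [ConjAct.smul_def]

namespace Commensurable

theorem map_iff {f : G →* G'} (hf : Function.Injective f) {H K : Subgroup G} :
    Commensurable (H.map f) (K.map f) ↔ Commensurable H K := by
  simp only [Commensurable, relIndex_map_map_of_injective _ _ hf]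

theorem comap_commensurator_map {f : G →* G'} (hf : Function.Injective f) (H : Subgroup G) :
    (commensurator (H.map f)).comap f = commensurator H := by
  ext g
  rw [mem_comap, commensurator_mem_iff, commensurator_mem_iff, toConjAct_smul_map, map_iff hf]

theorem normalizer_le_commensurator (H : Subgroup G) :
    normalizer (H : Set G) ≤ commensurator H := fun g hg => by
  have hgH : ConjAct.toConjAct g • H = H := mem_normalizer_iff_map_conj_eq.mp hg
  rw [commensurator_mem_iff, hgH]

theorem inf_of_le {H K L : Subgroup G} (hHK : Commensurable H K) (hHL : H ≤ L) :
    Commensurable K (K ⊓ L) := by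
  refine ⟨by simp [relIndex_eq_one.mpr inf_le_left], fun h => hHK.1 ?_⟩
  rw [← inf_relIndex_right]
  exact relIndex_eq_zero_of_le_left (le_inf inf_le_right (inf_le_left.trans hHL)) h

end Commensurable

end Subgroup

/-- If for every virtually free abelian subgroup `H` of `G` there is a subgroup `H'` of `G`
commensurable with `H` whose normalizer equals the commensurator `N_G[H]`, then every
subgroup `L` of `G` has the same property. -/
theorem stmt0 {G : Type*} [Group G]
    (hG : ∀ H : Subgroup G, IsVirtuallyFreeAbelian H →
      ∃ H' : Subgroup G, Subgroup.Commensurable H H' ∧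
        Subgroup.Commensurable.commensurator H = Subgroup.normalizer (H' : Set G)) :
    ∀ L : Subgroup G, ∀ H : Subgroup L, IsVirtuallyFreeAbelian H →
      ∃ H'' : Subgroup L, Subgroup.Commensurable H H'' ∧
        Subgroup.Commensurable.commensurator H = Subgroup.normalizer (H'' : Set L) := by
  intro L H hH
  obtain ⟨H', hHH', hcomm⟩ :=
    hG (H.map L.subtype) (hH.of_mulEquiv (H.equivMapOfInjective _ L.subtype_injective))
  have hH'' : Commensurable H (H'.subgroupOf L) := by
    rw [← Commensurable.map_iff L.subtype_injective, subgroupOf_map_subtype]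
    exact hHH'.trans (hHH'.inf_of_le (map_subtype_le H))
  refine ⟨H'.subgroupOf L, hH'', le_antisymm ?_ ?_⟩
  · rw [← Commensurable.comap_commensurator_map L.subtype_injective, hcomm]
    exact le_normalizer_comap _
  · rw [hH''.eq]
    exact Commensurable.normalizer_le_commensurator _
end

section
/- Let G be a group and let F be a normal subgroup of G such that F is a free group and the quotient group G/F is torsion-free and satisfies condition C. Then G satisfies condition C. -/
/-!
If `h ∈ F`, conjugation by `g` restricts to an automorphism `φ` of the free group `F` with
`φ (h ^ k) = h ^ l`, hence `(φ ^ n) h ^ k ^ n = h ^ l ^ n` for all `n`. In a free group the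
word length of `w ^ z` is at least `|z|` when `w ≠ 1` (the cyclic reduction of `w` is repeated
`|z|` times) and at most `|z| * ‖w‖`, so `|k| ^ n ≤ |l| ^ n * ‖h‖` for all `n`, forcing
`|k| ≤ |l|`; the inverse automorphism gives `|l| ≤ |k|`. If `h ∉ F`, its image in `G ⧸ F` is
nontrivial, hence of infinite order, and condition C in the quotient applies.
-/

/-- A group `G` satisfies condition C if for all `g h ∈ G` with `h` of infinite order and
all integers `k, l`, the relation `g * h ^ k * g⁻¹ = h ^ l` implies `|k| = |l|`. -/
def ConditionC (G : Type*) [Group G] : Prop :=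
  ∀ g h : G, ¬ IsOfFinOrder h → ∀ k l : ℤ, g * h ^ k * g⁻¹ = h ^ l → |k| = |l|

theorem Nat.le_of_forall_pow_le_mul_pow {a b C : ℕ} (h : ∀ n, a ^ n ≤ C * b ^ n) :
    a ≤ b := by
  by_contra! hba
  rcases Nat.eq_zero_or_pos b with rfl | hb
  · exact (h 1).not_gt (by simpa using hba)
  have hb' : (0 : ℚ) < b := by exact_mod_cast hb
  obtain ⟨n, hn⟩ := pow_unbounded_of_one_lt (C : ℚ)
    ((one_lt_div hb').2 (by exact_mod_cast hba : (b : ℚ) < a))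
  rw [div_pow, lt_div_iff₀ (pow_pos hb' n)] at hn
  exact (h n).not_gt (by exact_mod_cast hn)

theorem MulAut.pow_apply_zpow_pow {G : Type*} [Group G] {φ : MulAut G} {x : G} {k l : ℤ}
    (h : φ (x ^ k) = x ^ l) (n : ℕ) : (φ ^ n) (x ^ k ^ n) = x ^ l ^ n := by
  induction n with
  | zero => simp
  | succ n ih =>
    calc (φ ^ (n + 1)) (x ^ k ^ (n + 1)) = (φ ^ n) (φ ((x ^ k) ^ k ^ n)) := by
          rw [pow_succ, MulAut.mul_apply, pow_succ', zpow_mul]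
      _ = (φ ^ n) ((x ^ k ^ n) ^ l) := by rw [map_zpow, h, ← zpow_mul, ← zpow_mul, mul_comm]
      _ = x ^ l ^ (n + 1) := by rw [map_zpow, ih, ← zpow_mul, ← pow_succ]

namespace FreeGroup

variable {α : Type*} [DecidableEq α]

theorem reduceCyclically_toWord_ne_nil {x : FreeGroup α} (hx : x ≠ 1) :
    reduceCyclically x.toWord ≠ [] := by
  intro h
  have := congr_arg mk (reduceCyclically.conj_conjugator_reduceCyclically x.toWord)
  rw [h, List.append_nil, ← mul_mk, ← inv_mk, mul_inv_cancel, mk_toWord] at this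
  exact hx this.symm

theorem le_norm_pow {x : FreeGroup α} (hx : x ≠ 1) (n : ℕ) : n ≤ (x ^ n).norm := by
  rcases eq_or_ne n 0 with rfl | hn
  · simp
  have hlen : (x ^ n).norm = 2 * (reduceCyclically.conjugator x.toWord).length
      + n * (reduceCyclically x.toWord).length := by
    simp [norm, toWord_pow, reduceCyclically.reduce_flatten_replicate isReduced_toWord, hn]
    ring
  have := List.length_pos_iff.2 (reduceCyclically_toWord_ne_nil hx)
  rw [hlen]
  exact (Nat.le_mul_of_pos_right n this).trans (Nat.le_add_left _ _)

theorem natAbs_le_norm_zpow {x : FreeGroup α} (hx : x ≠ 1) (z : ℤ) :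
    z.natAbs ≤ (x ^ z).norm := by
  obtain ⟨n, rfl | rfl⟩ := Int.eq_nat_or_neg z <;>
    simpa [norm_inv_eq] using le_norm_pow hx n

theorem norm_pow_le (x : FreeGroup α) (n : ℕ) : (x ^ n).norm ≤ n * x.norm := by
  induction n with
  | zero => simp
  | succ n ih =>
    rw [pow_succ, add_one_mul]
    exact (norm_mul_le _ _).trans (by omega)

theorem norm_zpow_le (x : FreeGroup α) (z : ℤ) : (x ^ z).norm ≤ z.natAbs * x.norm := by
  obtain ⟨n, rfl | rfl⟩ := Int.eq_nat_or_neg z <;>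
    simpa [norm_inv_eq] using norm_pow_le x n

theorem natAbs_le_of_mulAut_zpow {φ : MulAut (FreeGroup α)} {x : FreeGroup α} (hx : x ≠ 1)
    {k l : ℤ} (h : φ (x ^ k) = x ^ l) : k.natAbs ≤ l.natAbs := by
  refine Nat.le_of_forall_pow_le_mul_pow (C := x.norm) fun n => ?_
  have hφx : (φ ^ n) x ≠ 1 := (map_ne_one_iff _ (φ ^ n).injective).2 hx
  calc k.natAbs ^ n = (k ^ n).natAbs := (Int.natAbs_pow k n).symm
    _ ≤ ((φ ^ n) x ^ k ^ n).norm := natAbs_le_norm_zpow hφx _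
    _ = (x ^ l ^ n).norm := by rw [← map_zpow, MulAut.pow_apply_zpow_pow h]
    _ ≤ (l ^ n).natAbs * x.norm := norm_zpow_le x _
    _ = x.norm * l.natAbs ^ n := by rw [Int.natAbs_pow, mul_comm]

end FreeGroup

theorem IsFreeGroup.natAbs_eq_of_mulAut_zpow {H : Type*} [Group H] [IsFreeGroup H]
    {φ : MulAut H} {x : H} (hx : x ≠ 1) {k l : ℤ} (h : φ (x ^ k) = x ^ l) :
    k.natAbs = l.natAbs := by
  classical
  let e := IsFreeGroup.toFreeGroup H
  have hex : e x ≠ 1 := (map_ne_one_iff e e.injective).2 hx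
  have key {ψ : MulAut H} {k l : ℤ} (h : ψ (x ^ k) = x ^ l) : k.natAbs ≤ l.natAbs :=
    FreeGroup.natAbs_le_of_mulAut_zpow (φ := MulAut.congr e ψ) hex (by simp [← map_zpow, h])
  exact le_antisymm (key h) (key (ψ := φ⁻¹) (by rw [← h]; simp))

/-- If `F` is a normal subgroup of `G` which is a free group, and the quotient `G ⧸ F`
is torsion-free and satisfies condition C, then `G` satisfies condition C. -/
theorem stmt3 {G : Type*} [Group G] (F : Subgroup G) [F.Normal]
    (hfree : IsFreeGroup F)
    (htf : ∀ x : G ⧸ F, x ≠ 1 → ¬ IsOfFinOrder x)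
    (hC : ConditionC (G ⧸ F)) : ConditionC G := by
  intro g h hinf k l hrel
  by_cases hF : h ∈ F
  · have hx : (⟨h, hF⟩ : F) ≠ 1 := fun h1 =>
      hinf (by rw [(Subgroup.mk_eq_one F).1 h1]; exact IsOfFinOrder.one)
    have hconj : MulAut.conjNormal g ((⟨h, hF⟩ : F) ^ k) = ⟨h, hF⟩ ^ l :=
      Subtype.ext (by simpa [MulAut.conjNormal_apply] using hrel)
    exact abs_eq_abs.2 (Int.natAbs_eq_natAbs_iff.1 (IsFreeGroup.natAbs_eq_of_mulAut_zpow hx hconj))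
  · refine hC g h (htf _ ?_) k l ?_
    · rwa [ne_eq, QuotientGroup.eq_one_iff]
    · simpa using congrArg (QuotientGroup.mk (s := F)) hrel
end

section
/- Let F be a free group and let h ∈ F be a nontrivial element. Then there exists an element r ∈ F such that h lies in the cyclic subgroup ⟨r⟩ generated by r, and every cyclic subgroup of F containing h is contained in ⟨r⟩. In particular, h is contained in a unique maximal infinite cyclic subgroup of F. -/
/-!
The centralizer `C` of `h` is free by Nielsen–Schreier and has the nontrivial central element `h`.
A free group with a nontrivial central element `z` is cyclic: commuting elements generate an
abelian free, hence cyclic, subgroup, and a generator `a` is not a proper power (count its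
exponent sum), so `z` would lie in `⟨a⟩ ∩ ⟨b⟩ = 1` for two distinct generators `a`, `b`.
So `C = ⟨r⟩`, and any `x` with `h ∈ ⟨x⟩` commutes with `h`, whence `⟨x⟩ ≤ C`.
-/

open Subgroup

namespace FreeGroup

variable {ι : Type*}

theorem not_commute_of_of_ne {a b : ι} (hab : a ≠ b) : ¬Commute (of a) (of b) := by
  classical
  intro hcomm
  let f : ι → Equiv.Perm (Fin 3) := fun x =>
    if x = a then Equiv.swap 0 1 else if x = b then Equiv.swap 1 2 else 1
  have ha : lift f (of a) = Equiv.swap 0 1 := by simp [f]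
  have hb : lift f (of b) = Equiv.swap 1 2 := by simp [f, hab.symm]
  have := hcomm.map (lift f)
  rw [ha, hb] at this
  exact absurd this.eq (by decide)

theorem isCyclic_of_subsingleton [Subsingleton ι] : IsCyclic (FreeGroup ι) := by
  rw [isCyclic_iff_exists_zpowers_eq_top, ← closure_range_of]
  obtain h | ⟨x, h⟩ := (Set.subsingleton_range (of : ι → FreeGroup ι)).eq_empty_or_singleton
  · exact ⟨1, by rw [h, Subgroup.closure_empty, zpowers_one_eq_bot]⟩
  · exact ⟨x, by rw [h, zpowers_eq_closure]⟩

variable [DecidableEq ι]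

def exponentSum (a : ι) : FreeGroup ι →* Multiplicative ℤ :=
  lift (Pi.mulSingle a (Multiplicative.ofAdd 1))

@[simp]
theorem exponentSum_of_self (a : ι) : exponentSum a (of a) = Multiplicative.ofAdd 1 := by
  simp [exponentSum]

@[simp]
theorem exponentSum_of_of_ne {a b : ι} (hab : b ≠ a) : exponentSum a (of b) = 1 := by
  simp [exponentSum, hab]

theorem toAdd_exponentSum_zpow (a : ι) (x : FreeGroup ι) (k : ℤ) :
    (exponentSum a (x ^ k)).toAdd = k * (exponentSum a x).toAdd := by
  rw [map_zpow, toAdd_zpow, smul_eq_mul]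

end FreeGroup

namespace IsFreeGroup

variable {G : Type*} [Group G] [IsFreeGroup G]

theorem isCyclic_of_subsingleton_generators [Subsingleton (Generators G)] : IsCyclic G :=
  have := FreeGroup.isCyclic_of_subsingleton (ι := Generators G)
  isCyclic_of_surjective (toFreeGroup G).symm (toFreeGroup G).symm.surjective

theorem subsingleton_generators_of_isMulCommutative [IsMulCommutative G] :
    Subsingleton (Generators G) := by
  refine ⟨fun a b => by_contra fun hab => FreeGroup.not_commute_of_of_ne hab ?_⟩
  have : Commute ((toFreeGroup G).symm (.of a)) ((toFreeGroup G).symm (.of b)) := mul_comm' _ _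
  simpa using this.map (toFreeGroup G)

theorem exists_mem_zpowers_of_commute {x y : G} (hxy : Commute x y) :
    ∃ z : G, x ∈ zpowers z ∧ y ∈ zpowers z := by
  set H := closure ({x, y} : Set G)
  have : IsMulCommutative H := isMulCommutative_closure <| by
    rintro _ (rfl | rfl) _ (rfl | rfl)
    exacts [rfl, hxy.eq, hxy.symm.eq, rfl]
  have := subsingleton_generators_of_isMulCommutative (G := H)
  have := isCyclic_of_subsingleton_generators (G := H)
  obtain ⟨z, hz⟩ := (H.isCyclic_iff_exists_zpowers_eq_top).mp this
  exact ⟨z, hz ▸ subset_closure (by simp), hz ▸ subset_closure (by simp)⟩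

end IsFreeGroup

namespace FreeGroup

variable {ι : Type*}

theorem mem_zpowers_of_of_commute {a : ι} {x : FreeGroup ι} (hx : Commute x (of a)) :
    x ∈ zpowers (of a) := by
  classical
  obtain ⟨p, hxp, hap⟩ := IsFreeGroup.exists_mem_zpowers_of_commute hx
  obtain ⟨t, hpt⟩ := mem_zpowers_iff.mp hap
  -- counting occurrences of `a` shows that `of a` is not a proper power
  have ht : t * (exponentSum a p).toAdd = 1 := by
    rw [← toAdd_exponentSum_zpow, hpt, exponentSum_of_self, toAdd_ofAdd]
  obtain rfl | rfl := Int.eq_one_or_neg_one_of_mul_eq_one ht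
  · rwa [← hpt, zpow_one]
  · rwa [← hpt, zpow_neg_one, zpowers_inv]

theorem eq_one_of_commute_of_of_ne {a b : ι} (hab : a ≠ b) {x : FreeGroup ι}
    (ha : Commute x (of a)) (hb : Commute x (of b)) : x = 1 := by
  classical
  obtain ⟨i, rfl⟩ := mem_zpowers_iff.mp (mem_zpowers_of_of_commute ha)
  obtain ⟨j, hj⟩ := mem_zpowers_iff.mp (mem_zpowers_of_of_commute hb)
  have := congrArg (fun y => (exponentSum a y).toAdd) hj
  simp only [toAdd_exponentSum_zpow, exponentSum_of_self, exponentSum_of_of_ne hab.symm,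
    toAdd_one, toAdd_ofAdd, mul_zero, mul_one] at this
  rw [← this, zpow_zero]

end FreeGroup

namespace IsFreeGroup

variable {G : Type*} [Group G] [IsFreeGroup G]

theorem subsingleton_generators_of_commute_of_ne_one {z : G} (hz : z ≠ 1)
    (hcomm : ∀ x : G, Commute z x) : Subsingleton (Generators G) := by
  refine ⟨fun a b => by_contra fun hab => hz ?_⟩
  have hcomm' (c : Generators G) : Commute (toFreeGroup G z) (.of c) := by
    simpa using (hcomm ((toFreeGroup G).symm (.of c))).map (toFreeGroup G)
  simpa using FreeGroup.eq_one_of_commute_of_of_ne hab (hcomm' a) (hcomm' b)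

theorem exists_centralizer_eq_zpowers {h : G} (hh : h ≠ 1) :
    ∃ r : G, centralizer {h} = zpowers r := by
  set C := centralizer ({h} : Set G)
  have hhC : h ∈ C := mem_centralizer_singleton_iff.mpr rfl
  have := subsingleton_generators_of_commute_of_ne_one (G := C) (z := ⟨h, hhC⟩)
    (by simpa using hh) fun x => Subtype.ext (mem_centralizer_singleton_iff.mp x.2).symm
  obtain ⟨r, hr⟩ := C.isCyclic_iff_exists_zpowers_eq_top.mp isCyclic_of_subsingleton_generators
  exact ⟨r, hr.symm⟩

end IsFreeGroup

/-- Every nontrivial element `h` of a free group lies in a unique maximal (infinite) cyclic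
subgroup: there is `r` with `h ∈ ⟨r⟩` such that every cyclic subgroup containing `h` is
contained in `⟨r⟩`. -/
theorem stmt5 {β : Type*} (h : FreeGroup β) (hh : h ≠ 1) :
    ∃ r : FreeGroup β, h ∈ Subgroup.zpowers r ∧
      ∀ x : FreeGroup β, h ∈ Subgroup.zpowers x →
        Subgroup.zpowers x ≤ Subgroup.zpowers r := by
  obtain ⟨r, hr⟩ := IsFreeGroup.exists_centralizer_eq_zpowers hh
  refine ⟨r, hr ▸ mem_centralizer_singleton_iff.mpr rfl, fun x hx => ?_⟩
  obtain ⟨k, rfl⟩ := mem_zpowers_iff.mp hx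
  rw [← hr, zpowers_le, mem_centralizer_singleton_iff]
  exact ((Commute.refl x).zpow_right k).eq
end
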